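/- Let L = L_I ∪ L_U with L_I ∩ L_U = ∅, and let S and I be IOLTSs over L with initial states s0 and q0. Then I ioco S holds if and only if otr(I) ∩ ((otr(S)·L_U) \ otr(S)) = ∅, i.e., there is no word of the form σ·x with σ ∈ otr(S), x ∈ L_U, σ·x ∈ otr(I) and σ·x ∉ otr(S). -/

import Mathlib

/-- Observable paths of an IOLTS: `ObsPath step s σ q` means there is a path
from `s` to `q` whose sequence of non-τ labels (τ = `none`) is `σ`. -/
inductive ObsPath {S L : Type*} (step : S → Option L → S → Prop) :
    S → List L → S → Prop
  | refl (s : S) : ObsPath step s [] s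
  | tau {s r q : S} {σ : List L} :
      step s none r → ObsPath step r σ q → ObsPath step s σ q
  | lbl {s r q : S} {l : L} {σ : List L} :
      step s (some l) r → ObsPath step r σ q → ObsPath step s (l :: σ) q

/-- Observable trace language of an IOLTS with initial state `s0`. -/
def otr {S L : Type*} (step : S → Option L → S → Prop) (s0 : S) :
    Set (List L) :=
  {σ | ∃ q, ObsPath step s0 σ q}

/-- `s after σ`: the set of states reachable from `s` via observable path `σ`. -/
def after {S L : Type*} (step : S → Option L → S → Prop) (s : S) (σ : List L) :
    Set S :=
  {q | ObsPath step s σ q}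

/-- `out(Q')`: the set of output labels enabled in some state of `Q'`. -/
def outOf {S L : Type*} (LU : Set L) (step : S → Option L → S → Prop)
    (Q' : Set S) : Set L :=
  {x | x ∈ LU ∧ ∃ q ∈ Q', ∃ q', step q (some x) q'}

/-!
An output `x` is enabled somewhere in `s after σ` exactly when `σ ++ [x]` is an observable trace
of `s`. Hence both sides say the same thing: for every `σ ∈ otr(S)` and `x ∈ L_U`, if `σ ++ [x]`
is a trace of `I` then it is a trace of `S`.
-/

section

variable {S L : Type*} {step : S → Option L → S → Prop}

namespace ObsPath

theorem append {s r q : S} {σ τ : List L} (h₁ : ObsPath step s σ r) (h₂ : ObsPath step r τ q) :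
    ObsPath step s (σ ++ τ) q := by
  induction h₁ with
  | refl => exact h₂
  | tau hτ _ ih => exact tau hτ (ih h₂)
  | lbl hl _ ih => exact lbl hl (ih h₂)

theorem exists_of_append {s q : S} {σ τ : List L} (h : ObsPath step s (σ ++ τ) q) :
    ∃ r, ObsPath step s σ r ∧ ObsPath step r τ q := by
  generalize hw : σ ++ τ = w at h
  induction h generalizing σ with
  | refl s =>
    obtain ⟨rfl, rfl⟩ := List.append_eq_nil_iff.mp hw
    exact ⟨s, refl s, refl s⟩
  | tau hτ _ ih =>
    obtain ⟨r, hσ, hτ'⟩ := ih hw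
    exact ⟨r, tau hτ hσ, hτ'⟩
  | @lbl s r q l w hl hp ih =>
    cases σ with
    | nil =>
      rw [List.nil_append] at hw
      exact ⟨s, refl s, hw ▸ lbl hl hp⟩
    | cons a σ =>
      rw [List.cons_append, List.cons_eq_cons] at hw
      obtain ⟨rfl, hw⟩ := hw
      obtain ⟨r', hσ, hτ⟩ := ih hw
      exact ⟨r', lbl hl hσ, hτ⟩

theorem exists_of_cons {s q : S} {x : L} {σ : List L} (h : ObsPath step s (x :: σ) q) :
    ∃ r r', ObsPath step s [] r ∧ step r (some x) r' ∧ ObsPath step r' σ q := by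
  generalize hw : x :: σ = w at h
  induction h with
  | refl => cases hw
  | tau hτ _ ih =>
    obtain ⟨r, r', hε, hx, hσ⟩ := ih hw
    exact ⟨r, r', tau hτ hε, hx, hσ⟩
  | @lbl s r q l w hl hp =>
    obtain ⟨rfl, rfl⟩ := List.cons_eq_cons.mp hw
    exact ⟨s, r, refl s, hl, hp⟩

end ObsPath

theorem append_singleton_mem_otr_iff {s : S} {σ : List L} {x : L} :
    σ ++ [x] ∈ otr step s ↔ ∃ q ∈ after step s σ, ∃ q', step q (some x) q' := by
  constructor
  · rintro ⟨q, h⟩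
    obtain ⟨r, hσ, hx⟩ := h.exists_of_append
    obtain ⟨r₁, r₂, hε, hstep, -⟩ := hx.exists_of_cons
    exact ⟨r₁, List.append_nil σ ▸ hσ.append hε, r₂, hstep⟩
  · rintro ⟨q, hq, q', hstep⟩
    exact ⟨q', hq.append (.lbl hstep (.refl q'))⟩

theorem mem_outOf_after_iff {LU : Set L} {s : S} {σ : List L} {x : L} :
    x ∈ outOf LU step (after step s σ) ↔ x ∈ LU ∧ σ ++ [x] ∈ otr step s := by
  rw [append_singleton_mem_otr_iff]
  rfl

end

theorem ioco_iff_inter_empty_general {SS Q L : Type*} (LU : Set L)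
    (stepS : SS → Option L → SS → Prop) (s0 : SS)
    (stepI : Q → Option L → Q → Prop) (q0 : Q) :
    (∀ σ ∈ otr stepS s0,
        outOf LU stepI (after stepI q0 σ) ⊆ outOf LU stepS (after stepS s0 σ)) ↔
      otr stepI q0 ∩
        ({w | ∃ σ ∈ otr stepS s0, ∃ x ∈ LU, w = σ ++ [x]} \ otr stepS s0) = ∅ := by
  simp only [Set.subset_def, mem_outOf_after_iff, Set.eq_empty_iff_forall_notMem]
  constructor
  · rintro hioco _ ⟨hI, ⟨σ, hσ, x, hx, rfl⟩, hS⟩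
    exact hS (hioco σ hσ x ⟨hx, hI⟩).2
  · intro hempty σ hσ x ⟨hx, hI⟩
    by_contra hS
    exact hempty _ ⟨hI, ⟨σ, hσ, x, hx, rfl⟩, fun h => hS ⟨hx, h⟩⟩

/-- `I ioco S` holds iff `otr(I) ∩ ((otr(S)·L_U) \ otr(S)) = ∅`,
i.e. there is no word `σ ++ [x]` with `σ ∈ otr(S)`, `x ∈ L_U`,
`σ ++ [x] ∈ otr(I)` and `σ ++ [x] ∉ otr(S)`. -/
theorem ioco_iff_inter_empty {SS Q L : Type*} (LI LU : Set L)
    (h_union : LI ∪ LU = Set.univ) (h_disj : LI ∩ LU = ∅)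
    (stepS : SS → Option L → SS → Prop) (s0 : SS)
    (stepI : Q → Option L → Q → Prop) (q0 : Q) :
    (∀ σ ∈ otr stepS s0,
        outOf LU stepI (after stepI q0 σ) ⊆ outOf LU stepS (after stepS s0 σ)) ↔
      otr stepI q0 ∩
        ({w | ∃ σ ∈ otr stepS s0, ∃ x ∈ LU, w = σ ++ [x]} \ otr stepS s0) = ∅ :=
  ioco_iff_inter_empty_general LU stepS s0 stepI q0
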